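/- Soundness of guarded patterns: extend the declarative semantics with guarded patterns (p where g), where θ ⊢ (p where g) ≈ t iff θ ⊢ p ≈ t and the closed guard g[θ] evaluates to true. Extend the machine with actions check(g) such that matching (p where g) against t pushes [match p t, check g], and check(g) continues if g[θ] evaluates to true and backtracks otherwise. Then: if the machine started from (∅, [], [match p t]) reaches success(θ), then θ ⊢ p ≈ t in the extended declarative semantics. -/

import Mathlib

namespace PyPM

inductive Tm where
  | app : String → List Tm → Tm

/-- Expressions in guards: attribute accesses on terms/variables and arithmetic. -/
inductive GExp where
  | attrT : Tm → String → GExp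
  | attrV : String → String → GExp
  | add : GExp → GExp → GExp
  | sub : GExp → GExp → GExp

/-- Guards: boolean constraints over expressions. -/
inductive Guard where
  | eq : GExp → GExp → Guard
  | lt : GExp → GExp → Guard
  | and : Guard → Guard → Guard
  | or : Guard → Guard → Guard
  | not : Guard → Guard

/-- Patterns, extended with guarded patterns (p where g). -/
inductive Pat where
  | var : String → Pat
  | app : String → List Pat → Pat
  | alt : Pat → Pat → Pat
  | guard : Pat → Guard → Pat

abbrev Subst := String → Option Tm

def emptySubst : Subst := fun _ => none

def Subst.update (θ : Subst) (x : String) (t : Tm) : Subst :=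
  fun y => if y = x then some t else θ y

/-- An attribute interpretation assigns a partial natural-number value to each
attribute name on each term. -/
abbrev AttrInterp := String → Tm → Option Nat

/-- Evaluation of the substitution instance e[θ] of an expression: variable
attribute accesses are resolved through θ. -/
def evalExp (I : AttrInterp) (θ : Subst) : GExp → Option Nat
  | .attrT t α => I α t
  | .attrV x α => (θ x).bind (I α)
  | .add e1 e2 => do pure ((← evalExp I θ e1) + (← evalExp I θ e2))
  | .sub e1 e2 => do pure ((← evalExp I θ e1) - (← evalExp I θ e2))

/-- Boolean evaluation of the substitution instance g[θ] of a guard. -/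
def evalGuard (I : AttrInterp) (θ : Subst) : Guard → Option Bool
  | .eq e1 e2 => do pure (decide ((← evalExp I θ e1) = (← evalExp I θ e2)))
  | .lt e1 e2 => do pure (decide ((← evalExp I θ e1) < (← evalExp I θ e2)))
  | .and g1 g2 => do pure ((← evalGuard I θ g1) && (← evalGuard I θ g2))
  | .or g1 g2 => do pure ((← evalGuard I θ g1) || (← evalGuard I θ g2))
  | .not g => do pure (!(← evalGuard I θ g))

/-- Declarative matching semantics, extended with guarded patterns. -/
inductive Matches (I : AttrInterp) : Subst → Pat → Tm → Prop where
  | var {θ : Subst} {x : String} {t : Tm} :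
      θ x = some t → Matches I θ (.var x) t
  | app {θ : Subst} {f : String} {ps : List Pat} {ts : List Tm}
      (hlen : ps.length = ts.length)
      (hargs : ∀ i (h1 : i < ps.length) (h2 : i < ts.length), Matches I θ ps[i] ts[i]) :
      Matches I θ (.app f ps) (.app f ts)
  | alt1 {θ : Subst} {p p' : Pat} {t : Tm} :
      Matches I θ p t → Matches I θ (.alt p p') t
  | alt2 {θ : Subst} {p p' : Pat} {t : Tm} :
      Matches I θ p' t → Matches I θ (.alt p p') t
  | guard {θ : Subst} {p : Pat} {g : Guard} {t : Tm} :
      Matches I θ p t → evalGuard I θ g = some true →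
      Matches I θ (.guard p g) t

/-- Actions: match a pattern against a term, or check a guard. -/
inductive Action where
  | doMatch : Pat → Tm → Action
  | check : Guard → Action

abbrev Cont := List Action
abbrev Frame := Subst × Cont
abbrev Stack := List Frame

inductive St where
  | success : Subst → St
  | failure : St
  | running : Subst → Stack → Cont → St

def backtrack : Stack → St
  | [] => .failure
  | (θ, k) :: stk => .running θ stk k

/-- The step relation of the machine, extended with guard checking. -/
inductive Step (I : AttrInterp) : St → St → Prop where
  | success {θ stk} :
      Step I (.running θ stk []) (.success θ)
  | varBind {θ : Subst} {stk x t k} :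
      θ x = none →
      Step I (.running θ stk (.doMatch (.var x) t :: k)) (.running (θ.update x t) stk k)
  | varBound {θ : Subst} {stk x t k} :
      θ x = some t →
      Step I (.running θ stk (.doMatch (.var x) t :: k)) (.running θ stk k)
  | varConflict {θ : Subst} {stk x t t' k} :
      θ x = some t' → t' ≠ t →
      Step I (.running θ stk (.doMatch (.var x) t :: k)) (backtrack stk)
  | fn {θ stk f ps ts k} :
      ps.length = ts.length →
      Step I (.running θ stk (.doMatch (.app f ps) (.app f ts) :: k))
           (.running θ stk (((ps.zip ts).map fun pt => .doMatch pt.1 pt.2) ++ k))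
  | fnConflict {θ stk f g ps ts k} :
      f ≠ g ∨ ps.length ≠ ts.length →
      Step I (.running θ stk (.doMatch (.app f ps) (.app g ts) :: k)) (backtrack stk)
  | alt {θ stk p p' t k} :
      Step I (.running θ stk (.doMatch (.alt p p') t :: k))
           (.running θ ((θ, .doMatch p' t :: k) :: stk) (.doMatch p t :: k))
  | guard {θ stk p g t k} :
      Step I (.running θ stk (.doMatch (.guard p g) t :: k))
           (.running θ stk (.doMatch p t :: .check g :: k))
  | checkTrue {θ : Subst} {stk g k} :
      evalGuard I θ g = some true →
      Step I (.running θ stk (.check g :: k)) (.running θ stk k)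
  | checkFalse {θ : Subst} {stk g k} :
      ¬ evalGuard I θ g = some true →
      Step I (.running θ stk (.check g :: k)) (backtrack stk)

end PyPM

open PyPM

/-! Read a successful run backwards. Call a frame `(θ₀, k)` sound for `θ` when `θ` extends `θ₀`
and every action of `k` holds under `θ`, and call a state sound when its current frame or some
frame saved on its stack is. The final state `success θ` is sound, and every step reflects
soundness: binding only grows the substitution, and guards are monotone along extensions, so a
guard checked early stays true under `θ`. Soundness of the initial state is `θ ⊢ p ≈ t`. -/

universe u

theorem Option.lift₂_eq_some_mono {α β γ : Type u} {x x' : Option α} {y y' : Option β}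
    {f : α → β → γ} {c : γ} (hx : ∀ {a}, x = some a → x' = some a)
    (hy : ∀ {b}, y = some b → y' = some b) (h : (do pure (f (← x) (← y))) = some c) :
    (do pure (f (← x') (← y'))) = some c := by
  obtain ⟨a, ha, b, hb, rfl⟩ : ∃ a, x = some a ∧ ∃ b, y = some b ∧ f a b = c := by
    simpa only [Option.bind_eq_bind, Option.pure_def, Option.bind_eq_some_iff,
      Option.some.injEq] using h
  simp [hx ha, hy hb]

namespace PyPM

def Subst.Extends (θ θ₀ : Subst) : Prop := ∀ x t, θ₀ x = some t → θ x = some t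

theorem Subst.Extends.refl (θ : Subst) : θ.Extends θ := fun _ _ h => h

theorem Subst.Extends.of_update {θ θ₀ : Subst} {x : String} {t : Tm} (hx : θ₀ x = none)
    (h : θ.Extends (θ₀.update x t)) : θ.Extends θ₀ := by
  intro y s hy
  have hyx : y ≠ x := by rintro rfl; simp [hx] at hy
  exact h y s (by simp [Subst.update, hyx, hy])

section Monotone

variable {I : AttrInterp} {θ θ₀ : Subst}

theorem evalExp_of_extends (hθ : θ.Extends θ₀) {e : GExp} {n : Nat}
    (h : evalExp I θ₀ e = some n) : evalExp I θ e = some n := by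
  induction e generalizing n with
  | attrT => exact h
  | attrV x α =>
    obtain ⟨t, ht, hI⟩ := Option.bind_eq_some_iff.mp h
    simp [evalExp, hθ x t ht, hI]
  | add _ _ ih₁ ih₂ | sub _ _ ih₁ ih₂ => exact Option.lift₂_eq_some_mono ih₁ ih₂ h

theorem evalGuard_of_extends (hθ : θ.Extends θ₀) {g : Guard} {b : Bool}
    (h : evalGuard I θ₀ g = some b) : evalGuard I θ g = some b := by
  induction g generalizing b with
  | eq | lt =>
    exact Option.lift₂_eq_some_mono (evalExp_of_extends hθ) (evalExp_of_extends hθ) h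
  | and _ _ ih₁ ih₂ | or _ _ ih₁ ih₂ => exact Option.lift₂_eq_some_mono ih₁ ih₂ h
  | not g ih =>
    obtain ⟨a, ha, hb⟩ := Option.bind_eq_some_iff.mp h
    simpa [evalGuard, ih ha] using hb

end Monotone

def Action.Holds (I : AttrInterp) (θ : Subst) : Action → Prop
  | .doMatch p t => Matches I θ p t
  | .check g => evalGuard I θ g = some true

def SoundFrame (I : AttrInterp) (θ : Subst) (fr : Frame) : Prop :=
  θ.Extends fr.1 ∧ ∀ a ∈ fr.2, a.Holds I θ

def SoundFor (I : AttrInterp) (θ : Subst) : St → Prop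
  | .success θ' => θ' = θ
  | .failure => False
  | .running θ₀ stk k => SoundFrame I θ (θ₀, k) ∨ ∃ fr ∈ stk, SoundFrame I θ fr

section Invariant

variable {I : AttrInterp} {θ θ₀ θ₁ : Subst} {stk : Stack} {k k₁ : Cont}

theorem soundFor_backtrack_iff :
    SoundFor I θ (backtrack stk) ↔ ∃ fr ∈ stk, SoundFrame I θ fr := by
  cases stk <;> simp [backtrack, SoundFor]

theorem SoundFor.running_of_frame (h : SoundFor I θ (.running θ₁ stk k₁))
    (hfr : θ.Extends θ₁ → (∀ a ∈ k₁, a.Holds I θ) → θ.Extends θ₀ ∧ ∀ a ∈ k, a.Holds I θ) :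
    SoundFor I θ (.running θ₀ stk k) :=
  h.imp_left fun ⟨hθ, hk⟩ => hfr hθ hk

theorem SoundFor.running_of_backtrack (h : SoundFor I θ (backtrack stk)) :
    SoundFor I θ (.running θ₀ stk k) :=
  .inr (soundFor_backtrack_iff.mp h)

theorem matches_app_of_holds_zip {f : String} {ps : List Pat} {ts : List Tm}
    (hlen : ps.length = ts.length)
    (h : ∀ a ∈ (ps.zip ts).map (fun pt => Action.doMatch pt.1 pt.2), a.Holds I θ) :
    Matches I θ (.app f ps) (.app f ts) := by
  refine .app hlen fun i h₁ h₂ =>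
    h (.doMatch ps[i] ts[i]) (List.mem_map.mpr ⟨(ps[i], ts[i]), ?_, rfl⟩)
  exact List.mem_iff_getElem.mpr ⟨i, by simp [h₁, h₂], by simp⟩

theorem soundFor_of_step {s s' : St} (hs : Step I s s') (h : SoundFor I θ s') :
    SoundFor I θ s := by
  cases hs with
  | success => exact .inl ⟨h ▸ .refl _, by simp⟩
  | varBind hx =>
    refine h.running_of_frame fun hθ hk => ⟨hθ.of_update hx, ?_⟩
    exact List.forall_mem_cons.mpr ⟨.var (hθ _ _ (by simp [Subst.update])), hk⟩
  | varBound hx =>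
    exact h.running_of_frame fun hθ hk => ⟨hθ, List.forall_mem_cons.mpr ⟨.var (hθ _ _ hx), hk⟩⟩
  | fn hlen =>
    refine h.running_of_frame fun hθ hk => ⟨hθ, ?_⟩
    rw [List.forall_mem_append] at hk
    exact List.forall_mem_cons.mpr ⟨matches_app_of_holds_zip hlen hk.1, hk.2⟩
  | alt =>
    simp only [SoundFor, SoundFrame, List.forall_mem_cons, List.exists_mem_cons_iff] at h ⊢
    rcases h with ⟨hθ, hp, hk⟩ | ⟨hθ, hp', hk⟩ | hstk
    · exact .inl ⟨hθ, .alt1 hp, hk⟩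
    · exact .inl ⟨hθ, .alt2 hp', hk⟩
    · exact .inr hstk
  | guard =>
    refine h.running_of_frame fun hθ hk => ⟨hθ, ?_⟩
    simp only [List.forall_mem_cons] at hk ⊢
    exact ⟨.guard hk.1 hk.2.1, hk.2.2⟩
  | checkTrue hg =>
    exact h.running_of_frame fun hθ hk =>
      ⟨hθ, List.forall_mem_cons.mpr ⟨evalGuard_of_extends hθ hg, hk⟩⟩
  | varConflict | fnConflict | checkFalse => exact h.running_of_backtrack

theorem soundFor_of_transGen {s : St} (h : Relation.TransGen (Step I) s (.success θ)) :
    SoundFor I θ s :=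
  h.head_induction_on (fun hs => soundFor_of_step hs rfl)
    (fun hs _ ih => soundFor_of_step hs ih)

end Invariant

end PyPM

/-- Soundness of the machine extended with guarded patterns (success case). -/
theorem guarded_soundness_success (I : AttrInterp) {p : Pat} {t : Tm} {θ : Subst}
    (h : Relation.TransGen (Step I) (.running emptySubst [] [.doMatch p t]) (.success θ)) :
    Matches I θ p t := by
  obtain ⟨-, hk⟩ | ⟨_, hfr, -⟩ := soundFor_of_transGen h
  · exact hk _ List.mem_cons_self
  · exact absurd hfr List.not_mem_nil
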